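/- Let I be an open real interval, θ₀ ≠ 0 a real constant, a₁, a₂, a₃ : I → ℝ smooth functions, and let α₁, α₂, α₃, α₄ : I → ℝ⁴ satisfy α₁' = a₁α₃, α₂' = a₂α₃, α₃' = −a₁α₁ − a₂α₂ + a₃α₄, α₄' = −a₃α₃ on I, with ⟨αᵢ(v), αⱼ(v)⟩ = δᵢⱼ for all v ∈ I (Euclidean inner product on ℝ⁴). Define ψ(u,v) = cos(u·cosh θ₀)·α₁(v) + sin(u·cosh θ₀)·α₂(v) and φ(u,v) = (u·sinh θ₀, ψ(u,v)) ∈ ℝ × ℝ⁴. Then for all (u,v) ∈ ℝ × I: (i) ⟨ψ(u,v), ψ(u,v)⟩ = 1, so φ takes values in 𝔼¹₁ × 𝕊³; (ii) ∂_u²φ = −cosh²θ₀ · (0, ψ(u,v)), which is normal to 𝔼¹₁ × 𝕊³ inside ℝ × ℝ⁴ at φ(u,v); (iii) ∂_u∂_v φ and ∂_v φ are both scalar multiples of (0, α₃(v)); (iv) g(∂_u φ, ∂_u φ) = 1 and g(∂_u φ, ∂_v φ) = 0. In particular φ parametrizes a space-like surface in 𝔼¹₁ × 𝕊³ whose second fundamental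 form vanishes on the coordinate direction ∂_u, i.e. the surface has positive relative nullity. -/

import Mathlib

/-- The Lorentzian product metric of `𝔼¹₁ × 𝔼⁴ = ℝ × ℝ⁴`:
`g((s₁,y₁),(s₂,y₂)) = -s₁ s₂ + ⟨y₁, y₂⟩`. -/
noncomputable def lorentzMetric (X Y : ℝ × EuclideanSpace ℝ (Fin 4)) : ℝ :=
  -(X.1 * Y.1) + (inner ℝ X.2 Y.2 : ℝ)

/-- Proposition 5.1 of the paper.  With an orthonormal moving frame
`{α₁, α₂, α₃, α₄}` solving the displayed system, the surface
`φ(u,v) = (u sinh θ₀, cos(u cosh θ₀) α₁(v) + sin(u cosh θ₀) α₂(v))` is a space-like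
surface in `𝔼¹₁ × 𝕊³` with positive relative nullity: `ψ` has unit length, `∂u²φ` is
normal to `𝔼¹₁ × 𝕊³` (a multiple of `(0, ψ)`), `∂u∂vφ` and `∂vφ` are multiples of
`(0, α₃)`, and `g(∂uφ, ∂uφ) = 1`, `g(∂uφ, ∂vφ) = 0`. -/
theorem spacelike_PRN_surface_in_E11S3 (A B θ₀ : ℝ) (hθ₀ : θ₀ ≠ 0)
    (a₁ a₂ a₃ : ℝ → ℝ)
    (ha₁ : ContDiffOn ℝ (⊤ : ℕ∞) a₁ (Set.Ioo A B)) (ha₂ : ContDiffOn ℝ (⊤ : ℕ∞) a₂ (Set.Ioo A B))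
    (ha₃ : ContDiffOn ℝ (⊤ : ℕ∞) a₃ (Set.Ioo A B))
    (α₁ α₂ α₃ α₄ : ℝ → EuclideanSpace ℝ (Fin 4))
    (hα₁ : ∀ v ∈ Set.Ioo A B, HasDerivAt α₁ (a₁ v • α₃ v) v)
    (hα₂ : ∀ v ∈ Set.Ioo A B, HasDerivAt α₂ (a₂ v • α₃ v) v)
    (hα₃ : ∀ v ∈ Set.Ioo A B,
      HasDerivAt α₃ (-(a₁ v) • α₁ v + -(a₂ v) • α₂ v + a₃ v • α₄ v) v)
    (hα₄ : ∀ v ∈ Set.Ioo A B, HasDerivAt α₄ (-(a₃ v) • α₃ v) v)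
    (horth : ∀ v ∈ Set.Ioo A B,
      (inner ℝ (α₁ v) (α₁ v) : ℝ) = 1 ∧ (inner ℝ (α₂ v) (α₂ v) : ℝ) = 1 ∧
      (inner ℝ (α₃ v) (α₃ v) : ℝ) = 1 ∧ (inner ℝ (α₄ v) (α₄ v) : ℝ) = 1 ∧
      (inner ℝ (α₁ v) (α₂ v) : ℝ) = 0 ∧ (inner ℝ (α₁ v) (α₃ v) : ℝ) = 0 ∧
      (inner ℝ (α₁ v) (α₄ v) : ℝ) = 0 ∧ (inner ℝ (α₂ v) (α₃ v) : ℝ) = 0 ∧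
      (inner ℝ (α₂ v) (α₄ v) : ℝ) = 0 ∧ (inner ℝ (α₃ v) (α₄ v) : ℝ) = 0)
    (ψ : ℝ → ℝ → EuclideanSpace ℝ (Fin 4))
    (hψ : ∀ u v, ψ u v
      = Real.cos (u * Real.cosh θ₀) • α₁ v + Real.sin (u * Real.cosh θ₀) • α₂ v)
    (φ : ℝ → ℝ → ℝ × EuclideanSpace ℝ (Fin 4))
    (hφ : ∀ u v, φ u v = (u * Real.sinh θ₀, ψ u v)) :
    ∀ u : ℝ, ∀ v ∈ Set.Ioo A B,
      -- (i) `φ` takes values in `𝔼¹₁ × 𝕊³`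
      (inner ℝ (ψ u v) (ψ u v) : ℝ) = 1 ∧
      -- (ii) `∂u²φ` is normal to `𝔼¹₁ × 𝕊³`
      deriv (fun u' => deriv (fun u'' => φ u'' v) u') u
        = (-(Real.cosh θ₀ ^ 2)) • ((0 : ℝ), ψ u v) ∧
      -- (iii) `∂u∂vφ` and `∂vφ` are multiples of `(0, α₃)`
      (∃ c : ℝ, deriv (fun u' => deriv (fun v' => φ u' v') v) u
        = c • ((0 : ℝ), α₃ v)) ∧
      (∃ c : ℝ, deriv (fun v' => φ u v') v = c • ((0 : ℝ), α₃ v)) ∧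
      -- (iv) the surface is space-like
      lorentzMetric (deriv (fun u' => φ u' v) u) (deriv (fun u' => φ u' v) u) = 1 ∧
      lorentzMetric (deriv (fun u' => φ u' v) u) (deriv (fun v' => φ u v') v) = 0 := by
  intro u v hv
  set k := Real.cosh θ₀ with hk
  set s := Real.sinh θ₀ with hs
  obtain ⟨h11, h22, h33, h44, h12, h13, h14, h23, h24, h34⟩ := horth v hv
  have h21 : (inner ℝ (α₂ v) (α₁ v) : ℝ) = 0 := by rw [real_inner_comm]; exact h12
  have h31 : (inner ℝ (α₃ v) (α₁ v) : ℝ) = 0 := by rw [real_inner_comm]; exact h13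
  have h32 : (inner ℝ (α₃ v) (α₂ v) : ℝ) = 0 := by rw [real_inner_comm]; exact h23
  have hcos : ∀ x : ℝ, HasDerivAt (fun u => Real.cos (u*k)) (-Real.sin (x*k) * k) x :=
    fun x => by have h := (Real.hasDerivAt_cos (x*k)).comp x (hasDerivAt_mul_const (x := x) k); exact h
  have hsin : ∀ x : ℝ, HasDerivAt (fun u => Real.sin (u*k)) (Real.cos (x*k) * k) x :=
    fun x => by have h := (Real.hasDerivAt_sin (x*k)).comp x (hasDerivAt_mul_const (x := x) k); exact h
  have hpyth := Real.sin_sq_add_cos_sq (u*k)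
  have hcoshsq : k^2 - s^2 = 1 := by
    rw [hk, hs]; nlinarith [Real.cosh_sq_sub_sinh_sq θ₀]
  -- ∂u φ
  have hFu : ∀ x : ℝ, HasDerivAt (fun u'' => φ u'' v)
      (s, (-Real.sin (x*k) * k) • α₁ v + (Real.cos (x*k) * k) • α₂ v) x := by
    intro x
    have h1 : HasDerivAt (fun u'' : ℝ => u'' * s) s x := hasDerivAt_mul_const s
    have h2 : HasDerivAt (fun u'' => ψ u'' v)
        ((-Real.sin (x*k) * k) • α₁ v + (Real.cos (x*k) * k) • α₂ v) x := by
      have := ((hcos x).smul_const (α₁ v)).add ((hsin x).smul_const (α₂ v))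
      apply this.congr_of_eventuallyEq
      filter_upwards with u'' using by rw [hψ]; rfl
    have := h1.prodMk h2
    apply this.congr_of_eventuallyEq
    filter_upwards with u'' using by rw [hφ]
  have hderivFu : deriv (fun u'' => φ u'' v)
      = fun x => ((s, (-Real.sin (x*k) * k) • α₁ v + (Real.cos (x*k) * k) • α₂ v)
        : ℝ × EuclideanSpace ℝ (Fin 4)) := funext fun x => (hFu x).deriv
  -- ∂v φ (for any u')
  have hFv : ∀ x : ℝ, HasDerivAt (fun v' => φ x v')
      (0, (Real.cos (x*k) * a₁ v + Real.sin (x*k) * a₂ v) • α₃ v) v := by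
    intro x
    have h1 : HasDerivAt (fun v' : ℝ => x * s) (0:ℝ) v := hasDerivAt_const v _
    have h2 : HasDerivAt (fun v' => ψ x v')
        ((Real.cos (x*k) * a₁ v + Real.sin (x*k) * a₂ v) • α₃ v) v := by
      have := ((hα₁ v hv).const_smul (Real.cos (x*k))).add
        ((hα₂ v hv).const_smul (Real.sin (x*k)))
      have heq : Real.cos (x*k) • (a₁ v • α₃ v) + Real.sin (x*k) • (a₂ v • α₃ v)
          = (Real.cos (x*k) * a₁ v + Real.sin (x*k) * a₂ v) • α₃ v := by
        rw [smul_smul, smul_smul, add_smul]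
      rw [heq] at this
      apply this.congr_of_eventuallyEq
      filter_upwards with v' using by rw [hψ]; rfl
    have := h1.prodMk h2
    apply this.congr_of_eventuallyEq
    filter_upwards with v' using by rw [hφ]
  refine ⟨?_, ?_, ?_, ?_, ?_, ?_⟩
  · -- (i)
    rw [hψ]
    simp only [inner_add_left, inner_add_right, real_inner_smul_left, real_inner_smul_right,
      h11, h22, h12, h21]
    nlinarith [hpyth]
  · -- (ii)
    rw [hderivFu]
    have hD : HasDerivAt (fun x => ((s, (-Real.sin (x*k) * k) • α₁ v + (Real.cos (x*k) * k) • α₂ v)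
        : ℝ × EuclideanSpace ℝ (Fin 4)))
        (0, (-(Real.cos (u*k) * k) * k) • α₁ v + (-(Real.sin (u*k)) * k * k) • α₂ v) u := by
      have h1 : HasDerivAt (fun _ : ℝ => s) (0:ℝ) u := hasDerivAt_const u _
      have hc : HasDerivAt (fun x => -Real.sin (x*k) * k) (-(Real.cos (u*k) * k) * k) u :=
        (((hsin u).neg).mul_const k)
      have hsn : HasDerivAt (fun x => Real.cos (x*k) * k) (-Real.sin (u*k) * k * k) u :=
        ((hcos u).mul_const k)
      exact h1.prodMk ((hc.smul_const (α₁ v)).add (hsn.smul_const (α₂ v)))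
    rw [hD.deriv]
    rw [hψ]
    have : (-(k ^ 2)) • (((0 : ℝ), Real.cos (u * k) • α₁ v + Real.sin (u * k) • α₂ v)
        : ℝ × EuclideanSpace ℝ (Fin 4))
        = ((0 : ℝ), (-(k^2) * Real.cos (u*k)) • α₁ v + (-(k^2) * Real.sin (u*k)) • α₂ v) := by
      rw [Prod.smul_mk, smul_add, smul_smul, smul_smul]
      simp
    rw [this]
    refine Prod.ext rfl ?_
    congr 2 <;> ring
  · -- (iii-a) mixed derivative
    refine ⟨(-Real.sin (u*k) * k) * a₁ v + (Real.cos (u*k) * k) * a₂ v, ?_⟩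
    have hrw : (fun u' => deriv (fun v' => φ u' v') v)
        = fun x => (((0:ℝ), (Real.cos (x*k) * a₁ v + Real.sin (x*k) * a₂ v) • α₃ v)
          : ℝ × EuclideanSpace ℝ (Fin 4)) := funext fun x => (hFv x).deriv
    rw [hrw]
    have hD : HasDerivAt (fun x => (((0:ℝ), (Real.cos (x*k) * a₁ v + Real.sin (x*k) * a₂ v) • α₃ v)
        : ℝ × EuclideanSpace ℝ (Fin 4)))
        (0, ((-Real.sin (u*k) * k) * a₁ v + (Real.cos (u*k) * k) * a₂ v) • α₃ v) u := by
      have h1 : HasDerivAt (fun _ : ℝ => (0:ℝ)) (0:ℝ) u := hasDerivAt_const u _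
      have h2 : HasDerivAt (fun x => Real.cos (x*k) * a₁ v + Real.sin (x*k) * a₂ v)
          ((-Real.sin (u*k) * k) * a₁ v + (Real.cos (u*k) * k) * a₂ v) u :=
        ((hcos u).mul_const (a₁ v)).add ((hsin u).mul_const (a₂ v))
      exact h1.prodMk (h2.smul_const (α₃ v))
    rw [hD.deriv, Prod.smul_mk]
    simp
  · -- (iii-b)
    exact ⟨Real.cos (u*k) * a₁ v + Real.sin (u*k) * a₂ v, by
      rw [(hFv u).deriv, Prod.smul_mk]; simp⟩
  · -- (iv-a)
    rw [(hFu u).deriv]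
    unfold lorentzMetric
    simp only [inner_add_left, inner_add_right, real_inner_smul_left, real_inner_smul_right,
      h11, h22, h12, h21]
    linear_combination k^2 * hpyth + hcoshsq
  · -- (iv-b)
    rw [(hFu u).deriv, (hFv u).deriv]
    unfold lorentzMetric
    simp only [inner_add_left, real_inner_smul_left, real_inner_smul_right, h13, h23]
    ring
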